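/- arXiv:1802.09733 — 2 statements merged into one kernel-verified Lean document; each statement's English description precedes it below -/
import Mathlib

section
/- Let Ω be a norm on ℝ^p that is weakly decomposable for a subset S ⊆ {1,…,p} with companion norm Ω^{S^c}. Then for all β, β′ ∈ ℝ^p one has the triangle property: Ω(β) − Ω(β′) ≤ Ω(β_S − β′_S) + Ω(β_{S^c}) − Ω^{S^c}(β′_{S^c}). -/
/-! Split `β = (β_S − β'_S) + β'_S + β_{Sᶜ}` and apply the triangle inequality twice; weak
decomposability bounds `Ω(β')` below by `Ω(β'_S) + Ω^{Sᶜ}(β'_{Sᶜ})`, and the `Ω(β'_S)` terms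
cancel. -/

open Finset

/-- `restr S b` is the vector `b_S`: coordinates in `S` kept, others set to `0`. -/
def restr {p : ℕ} (S : Finset (Fin p)) (b : Fin p → ℝ) : Fin p → ℝ :=
  fun j => if j ∈ S then b j else 0

lemma restr_add_restr_compl {p : ℕ} (S : Finset (Fin p)) (b : Fin p → ℝ) :
    restr S b + restr Sᶜ b = b := by
  funext j
  by_cases h : j ∈ S <;> simp [restr, h]

lemma apply_add_le_of_subadditive {G : Type*} [AddGroup G] (f : G → ℝ)
    (hf : ∀ a b, f (a + b) ≤ f a + f b) (x y z : G) :
    f (x + z) ≤ f (x - y) + f y + f z :=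
  calc f (x + z) = f (x - y + y + z) := by rw [sub_add_cancel]
    _ ≤ f (x - y + y) + f z := hf _ _
    _ ≤ f (x - y) + f y + f z := by gcongr; exact hf _ _

theorem triangle_property_of_weakly_decomposable_general {p : ℕ}
    (Om Omc : (Fin p → ℝ) → ℝ) (S : Finset (Fin p))
    -- `Om` is a norm on `ℝ^p`
    (hOm_tri : ∀ a b, Om (a + b) ≤ Om a + Om b)
    -- weak decomposability
    (hweak : ∀ b : Fin p → ℝ, Om (restr S b) + Omc (restr Sᶜ b) ≤ Om b)
    (β β' : Fin p → ℝ) :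
    Om β - Om β' ≤ Om (restr S β - restr S β') + Om (restr Sᶜ β) - Omc (restr Sᶜ β') := by
  have hβ : Om β ≤ Om (restr S β - restr S β') + Om (restr S β') + Om (restr Sᶜ β) := by
    simpa only [restr_add_restr_compl] using
      apply_add_le_of_subadditive Om hOm_tri (restr S β) (restr S β') (restr Sᶜ β)
  linarith [hweak β']

/-- **Triangle property of weakly decomposable norms** (Lemma 1).
If the norm `Om` on `ℝ^p` is weakly decomposable for `S` with companion norm `Omc`
(a norm on the coordinates indexed by `Sᶜ`), then for all `β, β'`,
`Om β − Om β' ≤ Om (β_S − β'_S) + Om (β_{Sᶜ}) − Omc (β'_{Sᶜ})`. -/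
theorem triangle_property_of_weakly_decomposable {p : ℕ}
    (Om Omc : (Fin p → ℝ) → ℝ) (S : Finset (Fin p))
    -- `Om` is a norm on `ℝ^p`
    (hOm_nonneg : ∀ b, 0 ≤ Om b)
    (hOm_tri : ∀ a b, Om (a + b) ≤ Om a + Om b)
    (hOm_smul : ∀ (c : ℝ) b, Om (c • b) = |c| * Om b)
    (hOm_definite : ∀ b, Om b = 0 → b = 0)
    -- `Omc` is a norm on the coordinates indexed by `Sᶜ`
    (hOmc_nonneg : ∀ b, restr Sᶜ b = b → 0 ≤ Omc b)
    (hOmc_tri : ∀ a b, restr Sᶜ a = a → restr Sᶜ b = b → Omc (a + b) ≤ Omc a + Omc b)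
    (hOmc_smul : ∀ (c : ℝ) b, restr Sᶜ b = b → Omc (c • b) = |c| * Omc b)
    (hOmc_definite : ∀ b, restr Sᶜ b = b → Omc b = 0 → b = 0)
    -- weak decomposability
    (hweak : ∀ b : Fin p → ℝ, Om (restr S b) + Omc (restr Sᶜ b) ≤ Om b)
    (β β' : Fin p → ℝ) :
    Om β - Om β' ≤ Om (restr S β - restr S β') + Om (restr Sᶜ β) - Omc (restr Sᶜ β') :=
  triangle_property_of_weakly_decomposable_general Om Omc S hOm_tri hweak β β'
end

section
/- Weak decomposability of the sorted ℓ₁-norm: let λ₁ ≥ λ₂ ≥ … ≥ λ_p ≥ 0 with λ₁ > 0 and let J_λ be the sorted ℓ₁-norm. Then for every β ∈ ℝ^p and every S ⊆ {1,…,p} with |S| = s and r = p − s: J_λ(β) ≥ Σ_{j=1}^s λ_j·|β_S|_{(j)} + Σ_{l=1}^r λ_{p−r+l}·|β_{S^c}|_{(l)}, where |β_S|_{(1)} ≥ … ≥ |β_S|_{(s)} is the decreasing rearrangement of the absolute values of the entries of β indexed by S, and |β_{S^c}|_{(1)} ≥ … ≥ |β_{S^c}|_{(r)} that of the entries indexed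 by S^c. -/
/-!
Let `s = |S|`. The decreasing rearrangement of `|β_S|` vanishes from position `s` on and that of
`|β_{Sᶜ}|` from position `p - s` on, so concatenating the first `s` entries of the former with the
first `p - s` entries of the latter gives a rearrangement `c` of `|β|`. The left-hand side is
`∑ λ_j c_j`, and since `λ` and `|β|_{(·)}` are both decreasing, the rearrangement inequality bounds
it by `∑ λ_j |β|_{(j)}`.
-/

open Finset

/-- `sortedAbs b j` is the `(j+1)`-st largest absolute value `|b|_{(j+1)}` among the entries
of `b` (the decreasing rearrangement of the absolute values of the entries of `b`). -/
noncomputable def sortedAbs {p : ℕ} (b : Fin p → ℝ) : Fin p → ℝ :=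
  fun j => |b (Tuple.sort (fun i => -|b i|) j)|

theorem Multiset.map_univ_val_comp_equiv {α β γ : Type*} [Fintype α] [Fintype β] (e : α ≃ β)
    (f : β → γ) : univ.val.map (f ∘ e) = univ.val.map f := by
  rw [← Multiset.map_map, Multiset.map_univ_val_equiv]

theorem Finset.map_val_add_map_val_compl {α β : Type*} [Fintype α] [DecidableEq α]
    (S : Finset α) (f : α → β) : S.val.map f + Sᶜ.val.map f = univ.val.map f := by
  rw [← Multiset.map_add, ← disjUnion_val S Sᶜ disjoint_compl_right, disjUnion_eq_union,
    union_compl]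

section Tuples

variable {n : ℕ}

theorem Fin.sum_ite_val_lt {M : Type*} [AddCommMonoid M] {m : ℕ} (hm : m ≤ n) (f : Fin n → M) :
    ∑ j : Fin n, (if (j : ℕ) < m then f j else 0) = ∑ i : Fin m, f (Fin.castLE hm i) := by
  rw [← sum_filter]
  refine Eq.trans ?_ (sum_map univ (Fin.castLEEmb hm) f)
  congr 1
  ext j
  simp only [mem_filter, mem_univ, true_and, mem_map, Fin.castLEEmb_apply]
  exact ⟨fun h => ⟨⟨j, h⟩, rfl⟩, by rintro ⟨i, rfl⟩; exact i.isLt⟩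

theorem Fin.map_univ_val_append {α : Type*} {m : ℕ} (u : Fin m → α) (v : Fin n → α) :
    univ.val.map (Fin.append u v) = univ.val.map u + univ.val.map v := by
  simp only [Fin.univ_val_map, List.ofFn_fin_append, Multiset.coe_add]

theorem Antitone.eq_of_map_univ_val_eq {α : Type*} [LinearOrder α] {f g : Fin n → α}
    (hf : Antitone f) (hg : Antitone g) (h : univ.val.map f = univ.val.map g) : f = g := by
  rw [Fin.univ_val_map, Fin.univ_val_map, Multiset.coe_eq_coe] at h
  exact List.ofFn_injective (h.eq_of_sortedGE hf.sortedGE_ofFn hg.sortedGE_ofFn)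

theorem sum_mul_le_sum_mul_of_map_univ_val_eq {α : Type*} [Semiring α] [LinearOrder α]
    [IsStrictOrderedRing α] [ExistsAddOfLE α] {w c y : Fin n → α} (hw : Antitone w)
    (hy : Antitone y) (h : univ.val.map c = univ.val.map y) :
    ∑ i, w i * c i ≤ ∑ i, w i * y i := by
  set σ := Tuple.sort (OrderDual.toDual ∘ c)
  have hσ : c ∘ σ = y := by
    refine Antitone.eq_of_map_univ_val_eq ?_ hy ?_
    · exact monotone_toDual_comp_iff.1 (Tuple.monotone_sort _)
    · rw [Multiset.map_univ_val_comp_equiv, h]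
  calc ∑ i, w i * c i = ∑ i, w i * y (σ.symm i) := by simp [← hσ]
    _ ≤ ∑ i, w i * y i := (hw.monovary hy).sum_mul_comp_perm_le_sum_mul

end Tuples

section SortedAbs

variable {p : ℕ}

theorem sortedAbs_antitone (b : Fin p → ℝ) : Antitone (sortedAbs b) := by
  intro i j hij
  simpa [sortedAbs] using Tuple.monotone_sort (fun i => -|b i|) hij

theorem map_univ_val_sortedAbs (b : Fin p → ℝ) :
    univ.val.map (sortedAbs b) = univ.val.map (|b ·|) :=
  Multiset.map_univ_val_comp_equiv (Tuple.sort _) (|b ·|)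

theorem sortedAbs_eq_zero_of_card_le {b : Fin p → ℝ} {j : Fin p} (h : #{i | b i ≠ 0} ≤ j) :
    sortedAbs b j = 0 := by
  by_contra hj
  have hcard : #{i | 0 < sortedAbs b i} = #{i | b i ≠ 0} :=
    card_equiv (Tuple.sort fun i => -|b i|) (by simp [sortedAbs])
  have := (Tuple.lt_card_gt_iff_apply_gt_of_antitone (sortedAbs_antitone b)).2
    ((abs_nonneg _).lt_of_ne' hj)
  omega

theorem map_univ_val_take_sortedAbs_add_replicate {b : Fin p → ℝ} {m : ℕ}
    (hb : #{i | b i ≠ 0} ≤ m) (hm : m ≤ p) :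
    univ.val.map (Fin.take m hm (sortedAbs b)) + Multiset.replicate (p - m) 0
      = univ.val.map (|b ·|) := by
  have hdrop : (List.ofFn (sortedAbs b)).drop m = List.replicate (p - m) 0 := by
    refine List.eq_replicate_iff.2 ⟨by simp, fun x hx => ?_⟩
    obtain ⟨i, hi, rfl⟩ := List.mem_iff_getElem.1 hx
    simp only [List.getElem_drop, List.getElem_ofFn]
    exact sortedAbs_eq_zero_of_card_le (hb.trans (Nat.le_add_right m i))
  rw [← map_univ_val_sortedAbs, Fin.univ_val_map, Fin.univ_val_map, Fin.ofFn_take_eq_take_ofFn,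
    ← Multiset.coe_replicate, ← hdrop, Multiset.coe_add, List.take_append_drop]

theorem map_univ_val_abs_restr (S : Finset (Fin p)) (b : Fin p → ℝ) :
    univ.val.map (|restr S b ·|) = S.val.map (|b ·|) + Multiset.replicate (p - #S) 0 := by
  rw [← S.map_val_add_map_val_compl]
  congr 1
  · exact Multiset.map_congr rfl fun i hi => by rw [Finset.mem_val] at hi; simp [restr, hi]
  · rw [Multiset.map_congr rfl (g := fun _ => 0) fun i hi => by
      rw [Finset.mem_val, mem_compl] at hi; simp [restr, hi]]
    rw [Multiset.map_const', card_val, card_compl, Fintype.card_fin]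

theorem map_univ_val_take_sortedAbs_restr (S : Finset (Fin p)) (b : Fin p → ℝ) {m : ℕ}
    (hS : #S = m) (hm : m ≤ p) :
    univ.val.map (Fin.take m hm (sortedAbs (restr S b))) = S.val.map (|b ·|) := by
  subst hS
  refine add_right_cancel (b := Multiset.replicate (p - #S) 0) ?_
  rw [map_univ_val_take_sortedAbs_add_replicate _ hm, map_univ_val_abs_restr]
  exact card_le_card fun i hi => by by_contra h; simp [restr, h] at hi

end SortedAbs

theorem sorted_l1_weakly_decomposable_general {p : ℕ} (lam : ℕ → ℝ)
    (hmono : ∀ i j : ℕ, i ≤ j → j < p → lam j ≤ lam i)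
    (β : Fin p → ℝ) (S : Finset (Fin p)) :
    (∑ j : Fin p, if (j : ℕ) < S.card then lam (j : ℕ) * sortedAbs (restr S β) j else 0)
      + (∑ j : Fin p, if (j : ℕ) < p - S.card
          then lam (S.card + (j : ℕ)) * sortedAbs (restr Sᶜ β) j else 0)
      ≤ ∑ j : Fin p, lam (j : ℕ) * sortedAbs β j := by
  have hs : #S ≤ p := by simpa using card_le_univ S
  have hr : p - #S ≤ p := Nat.sub_le p #S
  have hsr : #S + (p - #S) = p := by omega
  set c := Fin.append (Fin.take _ hs (sortedAbs (restr S β)))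
    (Fin.take _ hr (sortedAbs (restr Sᶜ β)))
  have hc : univ.val.map (c ∘ finCongr hsr.symm) = univ.val.map (sortedAbs β) := by
    rw [Multiset.map_univ_val_comp_equiv, Fin.map_univ_val_append,
      map_univ_val_take_sortedAbs_restr S β rfl,
      map_univ_val_take_sortedAbs_restr Sᶜ β (by simp [card_compl]),
      map_val_add_map_val_compl, map_univ_val_sortedAbs]
  have hlam : Antitone fun j : Fin p => lam j := fun i j hij => hmono i j hij j.isLt
  rw [Fin.sum_ite_val_lt hs, Fin.sum_ite_val_lt hr]
  calc _ = ∑ j : Fin (#S + (p - #S)), lam j * c j := by simp [Fin.sum_univ_add, c]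
    _ = ∑ j : Fin p, lam j * (c ∘ finCongr hsr.symm) j := (Fin.sum_congr' _ hsr.symm).symm
    _ ≤ _ := sum_mul_le_sum_mul_of_map_univ_val_eq hlam (sortedAbs_antitone β) hc

/-- **Weak decomposability of the sorted ℓ₁-norm** (Lemma 10).
With weights `λ₁ ≥ … ≥ λ_p ≥ 0`, `λ₁ > 0` (here `lam k` is `λ_{k+1}`), the sorted ℓ₁-norm
`J_λ(β) = ∑_{j=1}^p λ_j |β|_{(j)}` satisfies, for any `S` with `|S| = s` and `r = p − s`,
`J_λ(β) ≥ ∑_{j=1}^s λ_j |β_S|_{(j)} + ∑_{l=1}^r λ_{p−r+l} |β_{Sᶜ}|_{(l)}`. -/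
theorem sorted_l1_weakly_decomposable {p : ℕ} (lam : ℕ → ℝ)
    (hmono : ∀ i j : ℕ, i ≤ j → j < p → lam j ≤ lam i)
    (hnonneg : ∀ j : ℕ, j < p → 0 ≤ lam j)
    (hpos : 0 < lam 0)
    (β : Fin p → ℝ) (S : Finset (Fin p)) :
    (∑ j : Fin p, if (j : ℕ) < S.card then lam (j : ℕ) * sortedAbs (restr S β) j else 0)
      + (∑ j : Fin p, if (j : ℕ) < p - S.card
          then lam (S.card + (j : ℕ)) * sortedAbs (restr Sᶜ β) j else 0)
      ≤ ∑ j : Fin p, lam (j : ℕ) * sortedAbs β j :=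
  sorted_l1_weakly_decomposable_general lam hmono β S
end
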